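/- The split sample composite likelihood confidence set C^α(X_n) = {θ : U¹(θ;X_n) ≤ 1/α} contains the true parameter θ₀ with probability at least 1−α, for every sample size n. -/

import Mathlib

open MeasureTheory ENNReal BigOperators Finset

noncomputable section

/-- Lebesgue measure on `ℝ^d`. -/
def lebd (d : ℕ) : Measure (Fin d → ℝ) := Measure.pi fun _ => volume

/-- The marginal density, for the coordinates in `S`, of a joint density `p` on `ℝ^d`:
the coordinates outside `S` are integrated out. -/
def marg {d : ℕ} (p : (Fin d → ℝ) → ℝ≥0∞) (S : Finset (Fin d)) (x : Fin d → ℝ) : ℝ≥0∞ :=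
  ∫⁻ y : {j : Fin d // j ∉ S} → ℝ,
    p (fun j => if h : j ∈ S then x j else y ⟨j, h⟩) ∂(Measure.pi fun _ => volume)

/-- The individual composite likelihood (ICL): a weighted geometric mean (weights `σ_S/υ`,
`τ_{T}/υ`) of the marginal densities `p(x_S)` over nonempty `S ⊆ [d]` and the conditional
densities `p(x_{T⃖} | x_{T⃗}) = p(x_{T⃖ ∪ T⃗}) / p(x_{T⃗})` over ordered divisions of `[d]`
into disjoint nonempty subsets. -/
def icl {d : ℕ} (p : (Fin d → ℝ) → ℝ≥0∞)
    (σ : Finset (Fin d) → ℝ) (τ : Finset (Fin d) → Finset (Fin d) → ℝ) (υ : ℝ)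
    (x : Fin d → ℝ) : ℝ≥0∞ :=
  (∏ S ∈ univ.filter (fun S : Finset (Fin d) => S.Nonempty), marg p S x ^ (σ S / υ)) *
  (∏ T ∈ (univ ×ˢ univ).filter
      (fun T : Finset (Fin d) × Finset (Fin d) =>
        T.1.Nonempty ∧ T.2.Nonempty ∧ Disjoint T.1 T.2),
    (marg p (T.1 ∪ T.2) x / marg p T.2 x) ^ (τ T.1 T.2 / υ))

/-- The composite likelihood of an i.i.d. subsample `xs`. -/
def clik {d n : ℕ} (p : (Fin d → ℝ) → ℝ≥0∞)
    (σ : Finset (Fin d) → ℝ) (τ : Finset (Fin d) → Finset (Fin d) → ℝ) (υ : ℝ)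
    (xs : Fin n → Fin d → ℝ) : ℝ≥0∞ :=
  ∏ i, icl p σ τ υ (xs i)

/-- Law of the full split sample `(X_n¹, X_n²)` of i.i.d. observations with density `p θ₀`:
the product Lebesgue measure reweighted by the joint density. -/
def sampleLaw {d : ℕ} (n₁ n₂ : ℕ) (p₀ : (Fin d → ℝ) → ℝ≥0∞) :
    Measure ((Fin n₁ → Fin d → ℝ) × (Fin n₂ → Fin d → ℝ)) :=
  ((Measure.pi fun _ : Fin n₁ => lebd d).prod
      (Measure.pi fun _ : Fin n₂ => lebd d)).withDensity
    (fun z => (∏ i, p₀ (z.1 i)) * ∏ i, p₀ (z.2 i))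

open Function in
/-- Bridge: `marg` is a `lmarginal`. -/
lemma marg_eq_lmarginal {d : ℕ} (p : (Fin d → ℝ) → ℝ≥0∞) (hp : Measurable p)
    (S : Finset (Fin d)) (x : Fin d → ℝ) :
    marg p S x = (∫⋯∫⁻_Sᶜ, p ∂(fun _ => (volume : Measure ℝ))) x := by
  classical
  let e : {j : Fin d // j ∉ S} ≃ {j : Fin d // j ∈ Sᶜ} :=
    Equiv.subtypeEquivRight (fun j => (Finset.mem_compl (a := j)).symm)
  have hmp := measurePreserving_piCongrLeft
    (fun _ : {j : Fin d // j ∈ Sᶜ} => (volume : Measure ℝ)) e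
  have hg : Measurable fun z : ({j : Fin d // j ∈ Sᶜ} → ℝ) => p (updateFinset x Sᶜ z) :=
    hp.comp measurable_updateFinset
  have h0 : (∫⋯∫⁻_Sᶜ, p ∂(fun _ => (volume : Measure ℝ))) x
      = ∫⁻ y : ((i : {j : Fin d // j ∈ Sᶜ}) → ℝ), p (updateFinset x Sᶜ y)
        ∂(Measure.pi fun _ => volume) := rfl
  rw [h0, ← hmp.lintegral_comp hg, marg]
  apply lintegral_congr
  intro y
  congr 1
  funext j
  by_cases hj : j ∈ S
  · simp [updateFinset, Finset.mem_compl, hj]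
  · simp only [updateFinset, Finset.mem_compl, hj, dif_pos, dif_neg, not_false_iff]
    have h1 : (⟨j, Finset.mem_compl.mpr hj⟩ : {j : Fin d // j ∈ Sᶜ}) = e ⟨j, hj⟩ := rfl
    rw [h1, MeasurableEquiv.piCongrLeft_apply_apply]


section helpers
open Function

lemma measurable_marg {d : ℕ} (p : (Fin d → ℝ) → ℝ≥0∞) (hp : Measurable p)
    (S : Finset (Fin d)) : Measurable (marg p S) := by
  have : marg p S = (∫⋯∫⁻_Sᶜ, p ∂(fun _ => (volume : Measure ℝ))) :=
    funext (marg_eq_lmarginal p hp S)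
  rw [this]; exact hp.lmarginal _

/-- `lmarginal` over `s` is unchanged by updating coordinates inside `s`. -/
lemma lmarginal_updateFinset_of_subset {δ : Type*} [DecidableEq δ] {π : δ → Type*}
    [∀ i, MeasurableSpace (π i)] (μ : ∀ i, Measure (π i)) {s t : Finset δ} (hts : t ⊆ s)
    (f : (∀ i, π i) → ℝ≥0∞) (x : ∀ i, π i) (y : ∀ i : ↥t, π i) :
    (∫⋯∫⁻_s, f ∂μ) (updateFinset x t y) = (∫⋯∫⁻_s, f ∂μ) x := by
  apply lmarginal_congr
  intro i hi
  have hit : i ∉ t := fun h => hi (hts h)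
  simp [updateFinset, hit]

lemma lm_compl_norm {d : ℕ} (p : (Fin d → ℝ) → ℝ≥0∞) (hp : Measurable p)
    (h1 : ∫⁻ x, p x ∂lebd d = 1) (S : Finset (Fin d)) (x : Fin d → ℝ) :
    (∫⋯∫⁻_S, (∫⋯∫⁻_Sᶜ, p ∂(fun _ => (volume : Measure ℝ))) ∂(fun _ => (volume : Measure ℝ))) x
      = 1 := by
  rw [← lmarginal_union _ p hp disjoint_compl_right, Finset.union_compl, lmarginal_univ]
  exact h1

lemma marg_pos {d : ℕ} (p : (Fin d → ℝ) → ℝ≥0∞) (hp : Measurable p)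
    (hppos : ∀ x, 0 < p x) (S : Finset (Fin d)) (x : Fin d → ℝ) : 0 < marg p S x := by
  rw [marg]
  have hm : Measurable fun y : {j : Fin d // j ∉ S} → ℝ =>
      p (fun j => if h : j ∈ S then x j else y ⟨j, h⟩) := by
    apply hp.comp
    apply measurable_pi_lambda
    intro j
    by_cases h : j ∈ S
    · simp only [h, dif_pos]; exact measurable_const
    · simp only [h, dif_neg, not_false_iff]; exact measurable_pi_apply _
  rw [lintegral_pos_iff_support hm]
  have hsupp : (Function.support fun y : {j : Fin d // j ∉ S} → ℝ =>
      p (fun j => if h : j ∈ S then x j else y ⟨j, h⟩)) = Set.univ := by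
    ext y; simp [Function.support, (hppos _).ne']
  rw [hsupp, ← Set.pi_univ Set.univ, Measure.pi_pi]
  rw [CanonicallyOrderedAdd.prod_pos]
  intro i _
  simp

lemma marg_null {d : ℕ} (p : (Fin d → ℝ) → ℝ≥0∞) (hp : Measurable p)
    (h1 : ∫⁻ x, p x ∂lebd d = 1) (S : Finset (Fin d)) :
    lebd d {x | marg p S x = ∞} = 0 := by
  classical
  set V : Fin d → Measure ℝ := fun _ => volume with hV
  set A : (Fin d → ℝ) → ℝ≥0∞ := ∫⋯∫⁻_Sᶜ, p ∂V with hA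
  have hAm : Measurable A := hp.lmarginal _
  have hset : {x | marg p S x = ∞} = {x | A x = ∞} := by
    ext x; simp only [Set.mem_setOf_eq, marg_eq_lmarginal p hp S x]; exact Iff.rfl
  rw [hset]
  have hN : MeasurableSet {x | A x = ∞} := hAm (measurableSet_singleton ∞)
  set ind : (Fin d → ℝ) → ℝ≥0∞ := Set.indicator {x | A x = ∞} 1 with hind
  have hindm : Measurable ind := (measurable_one).indicator hN
  have x₀ : Fin d → ℝ := fun _ => 0
  have hinner : ∀ x, (∫⋯∫⁻_S, ind ∂V) x = 0 := by
    intro x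
    have h1' : (∫⋯∫⁻_S, A ∂V) x = 1 := lm_compl_norm p hp h1 S x
    have hae : ∀ᵐ y ∂(Measure.pi fun i : ↥S => V i),
        A (updateFinset x S y) < ∞ := by
      apply ae_lt_top (hAm.comp measurable_updateFinset)
      simp only [Function.comp_def]
      have : (∫⁻ y, A (updateFinset x S y) ∂(Measure.pi fun i : ↥S => V i))
          = (∫⋯∫⁻_S, A ∂V) x := rfl
      rw [this, h1']
      exact one_ne_top
    have : (∫⋯∫⁻_S, ind ∂V) x
        = ∫⁻ y, ind (updateFinset x S y) ∂(Measure.pi fun i : ↥S => V i) := rfl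
    rw [this]
    rw [show (0 : ℝ≥0∞) = ∫⁻ _y, 0 ∂(Measure.pi fun i : ↥S => V i) by simp]
    apply lintegral_congr_ae
    filter_upwards [hae] with y hy
    exact Set.indicator_of_notMem (by simpa using hy.ne) _
  calc lebd d {x | A x = ∞} = ∫⁻ x, ind x ∂lebd d := (lintegral_indicator_one hN).symm
    _ = (∫⋯∫⁻_univ, ind ∂V) x₀ := lintegral_eq_lmarginal_univ x₀
    _ = (∫⋯∫⁻_Sᶜ, (∫⋯∫⁻_S, ind ∂V) ∂V) x₀ := by
        rw [← lmarginal_union' V ind hindm disjoint_compl_right, Finset.union_compl]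
    _ = 0 := by
        have : (∫⋯∫⁻_S, ind ∂V) = fun _ => 0 := funext hinner
        rw [this]
        simp [lmarginal]

lemma ennreal_E (r s t : ℝ≥0∞) : r / (s / t) * s ≤ r * t := by
  rcases eq_or_ne s 0 with rfl | hs0
  · simp
  rcases eq_or_ne t ∞ with rfl | ht
  · rcases eq_or_ne r 0 with rfl | hr0
    · simp
    · rw [ENNReal.mul_top hr0]; exact le_top
  rcases eq_or_ne t 0 with rfl | ht0
  · simp [ENNReal.div_zero hs0]
  rcases eq_or_ne s ∞ with rfl | hst
  · rw [ENNReal.top_div_of_ne_top ht]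
    simp
  · rw [div_eq_mul_inv, ENNReal.inv_div (Or.inr hst) (Or.inr hs0), div_eq_mul_inv,
      mul_assoc, mul_assoc, ENNReal.inv_mul_cancel hs0 hst, mul_one]

lemma ennreal_div_mul_le (a b : ℝ≥0∞) : a / b * b ≤ a := by
  rcases eq_or_ne b 0 with rfl | h0
  · simp
  rcases eq_or_ne b ∞ with rfl | ht
  · simp
  · rw [ENNReal.div_mul_cancel h0 ht]

lemma ennreal_prod_div {ι : Type*} (s : Finset ι) (u v : ι → ℝ≥0∞)
    (h0 : ∀ k ∈ s, v k ≠ 0) (ht : ∀ k ∈ s, v k ≠ ∞) :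
    (∏ k ∈ s, u k) / (∏ k ∈ s, v k) = ∏ k ∈ s, u k / v k := by
  have hv0 : ∏ k ∈ s, v k ≠ 0 := Finset.prod_ne_zero_iff.mpr h0
  have hvt : ∏ k ∈ s, v k ≠ ∞ := (WithTop.prod_lt_top
    (fun k hk => lt_top_iff_ne_top.mpr (ht k hk))).ne
  symm
  rw [ENNReal.eq_div_iff hv0 hvt, ← Finset.prod_mul_distrib]
  exact Finset.prod_congr rfl fun k hk => by
    rw [mul_comm, ENNReal.div_mul_cancel (h0 k hk) (ht k hk)]

lemma ennreal_rpow_sum {ι : Type*} (x : ℝ≥0∞) (s : Finset ι) (w : ι → ℝ)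
    (hw : ∀ k ∈ s, 0 ≤ w k) : x ^ (∑ k ∈ s, w k) = ∏ k ∈ s, x ^ w k := by
  classical
  induction s using Finset.induction with
  | empty => simp
  | insert a s ha ih =>
    rw [Finset.sum_insert ha, Finset.prod_insert ha,
      ENNReal.rpow_add_of_nonneg _ _ (hw a (Finset.mem_insert_self a s))
        (Finset.sum_nonneg fun k hk => hw k (Finset.mem_insert_of_mem hk)),
      ih (fun k hk => hw k (Finset.mem_insert_of_mem hk))]

lemma lintegral_pi_prod {n : ℕ} {E : Type*} [MeasurableSpace E] [Nonempty E]
    (μ : Measure E) [SigmaFinite μ]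
    (F : E → ℝ≥0∞) (hF : Measurable F) :
    ∫⁻ xs, ∏ i, F (xs i) ∂(Measure.pi fun _ : Fin n => μ) = ∏ _i : Fin n, ∫⁻ x, F x ∂μ := by
  classical
  have hmeas : Measurable fun xs : Fin n → E => ∏ i, F (xs i) :=
    Finset.measurable_prod _ (fun i _ => hF.comp (measurable_pi_apply i))
  have key : ∀ s : Finset (Fin n), ∀ x : Fin n → E,
      (∫⋯∫⁻_s, (fun xs => ∏ i, F (xs i)) ∂(fun _ => μ)) x
        = (∏ _i ∈ s, ∫⁻ z, F z ∂μ) * ∏ i ∈ sᶜ, F (x i) := by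
    intro s
    induction s using Finset.induction with
    | empty => intro x; simp
    | insert a s ha ih =>
      intro x
      rw [MeasureTheory.lmarginal_insert _ hmeas ha x]
      have hstep : ∀ y : E, (∫⋯∫⁻_s, (fun xs => ∏ i, F (xs i)) ∂(fun _ => μ))
          (Function.update x a y)
          = ((∏ _i ∈ s, ∫⁻ z, F z ∂μ) * ∏ i ∈ sᶜ.erase a, F (x i)) * F y := by
        intro y
        rw [ih]
        have : ∏ i ∈ sᶜ, F (Function.update x a y i)
            = F y * ∏ i ∈ sᶜ.erase a, F (x i) := by
          rw [← Finset.mul_prod_erase sᶜ _ (Finset.mem_compl.mpr ha)]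
          simp only [Function.update_self]
          congr 1
          exact Finset.prod_congr rfl fun i hi => by
            rw [Function.update_of_ne (Finset.ne_of_mem_erase hi)]
        rw [this]; ring
      simp_rw [hstep]
      rw [lintegral_const_mul _ hF, Finset.prod_insert ha, Finset.compl_insert]
      ring
  have x₀ : Fin n → E := fun _ => Classical.arbitrary _
  rw [lintegral_eq_lmarginal_univ x₀, key univ x₀]
  simp

lemma lintegral_prod_le' {A B : Type*} [MeasurableSpace A] [MeasurableSpace B]
    (μ : Measure A) (ν : Measure B) [SFinite μ] [SFinite ν] (f : A × B → ℝ≥0∞) :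
    ∫⁻ z, f z ∂(μ.prod ν) ≤ ∫⁻ y, ∫⁻ x, f (x, y) ∂μ ∂ν := by
  rw [MeasureTheory.lintegral]
  refine iSup₂_le fun g hg => ?_
  have hgl : g.lintegral (μ.prod ν) = ∫⁻ z, g z ∂(μ.prod ν) :=
    (g.lintegral_eq_lintegral (μ.prod ν)).symm
  rw [hgl, lintegral_prod_symm' _ g.measurable]
  exact lintegral_mono fun y => lintegral_mono fun x => hg (x, y)

lemma pi_eval_null {n : ℕ} {E : Type*} [MeasurableSpace E] (μ : Measure E) [SigmaFinite μ]
    (N : Set E) (hN : MeasurableSet N) (h0 : μ N = 0) (i : Fin n) :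
    Measure.pi (fun _ : Fin n => μ) {xs | xs i ∈ N} = 0 := by
  classical
  have hset : {xs : Fin n → E | xs i ∈ N}
      = Set.pi Set.univ (fun j => if j = i then N else Set.univ) := by
    ext xs
    simp only [Set.mem_setOf_eq, Set.mem_pi, Set.mem_univ, forall_true_left]
    constructor
    · intro h j
      by_cases hj : j = i
      · subst hj; simp [h]
      · simp [hj]
    · intro h
      have := h i
      simpa using this
  rw [hset, Measure.pi_pi]
  exact Finset.prod_eq_zero (Finset.mem_univ i) (by simp [h0])

lemma factor_bound_inl {d : ℕ} (q q₀ : (Fin d → ℝ) → ℝ≥0∞)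
    (hq : Measurable q) (hq₀ : Measurable q₀)
    (hq1 : ∫⁻ x, q x ∂lebd d = 1) (S : Finset (Fin d)) :
    ∫⁻ x, (marg q S x / marg q₀ S x) * q₀ x ∂lebd d ≤ 1 := by
  classical
  set V : Fin d → Measure ℝ := fun _ => volume with hV
  set N : (Fin d → ℝ) → ℝ≥0∞ := ∫⋯∫⁻_Sᶜ, q ∂V with hN
  set D : (Fin d → ℝ) → ℝ≥0∞ := ∫⋯∫⁻_Sᶜ, q₀ ∂V with hD
  set g : (Fin d → ℝ) → ℝ≥0∞ := fun x => (N x / D x) * q₀ x with hg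
  have hgmarg : ∀ x, (marg q S x / marg q₀ S x) * q₀ x = g x := fun x => by
    rw [marg_eq_lmarginal q hq S x, marg_eq_lmarginal q₀ hq₀ S x]
  have hgm : Measurable g := ((hq.lmarginal _).div (hq₀.lmarginal _)).mul hq₀
  have hinner : ∀ x, (∫⋯∫⁻_Sᶜ, g ∂V) x ≤ N x := by
    intro x
    have hNu : ∀ y, N (updateFinset x Sᶜ y) = N x := fun y =>
      lmarginal_updateFinset_of_subset V (Finset.Subset.refl _) q x y
    have hDu : ∀ y, D (updateFinset x Sᶜ y) = D x := fun y =>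
      lmarginal_updateFinset_of_subset V (Finset.Subset.refl _) q₀ x y
    have h1 : (∫⋯∫⁻_Sᶜ, g ∂V) x
        = ∫⁻ y, (N x / D x) * q₀ (updateFinset x Sᶜ y)
            ∂(Measure.pi fun _ : ↥(Sᶜ : Finset (Fin d)) => (volume : Measure ℝ)) := by
      refine lintegral_congr fun y => ?_
      show (N (updateFinset x Sᶜ y) / D (updateFinset x Sᶜ y)) * q₀ (updateFinset x Sᶜ y) = _
      rw [hNu y, hDu y]
    have hq₀u : Measurable fun y : ↥(Sᶜ : Finset (Fin d)) → ℝ => q₀ (updateFinset x Sᶜ y) :=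
      hq₀.comp measurable_updateFinset
    rw [h1, lintegral_const_mul _ hq₀u]
    have h2 : (∫⁻ y, q₀ (updateFinset x Sᶜ y)
        ∂(Measure.pi fun _ : ↥(Sᶜ : Finset (Fin d)) => (volume : Measure ℝ))) = D x := rfl
    rw [h2]
    exact ennreal_div_mul_le _ _
  calc ∫⁻ x, (marg q S x / marg q₀ S x) * q₀ x ∂lebd d
      = ∫⁻ x, g x ∂lebd d := lintegral_congr hgmarg
    _ = (∫⋯∫⁻_univ, g ∂V) (fun _ => 0) := lintegral_eq_lmarginal_univ _
    _ = (∫⋯∫⁻_S, (∫⋯∫⁻_Sᶜ, g ∂V) ∂V) (fun _ => 0) := by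
        rw [← lmarginal_union V g hgm disjoint_compl_right, Finset.union_compl]
    _ ≤ (∫⋯∫⁻_S, N ∂V) (fun _ => 0) := lmarginal_mono hinner _
    _ = 1 := lm_compl_norm q hq hq1 S _

lemma factor_bound_inr {d : ℕ} (q q₀ : (Fin d → ℝ) → ℝ≥0∞)
    (hq : Measurable q) (hq₀ : Measurable q₀)
    (hq₀1 : ∫⁻ x, q₀ x ∂lebd d = 1) (T1 T2 : Finset (Fin d)) (hdisj : Disjoint T1 T2) :
    ∫⁻ x, ((marg q (T1 ∪ T2) x / marg q T2 x) / (marg q₀ (T1 ∪ T2) x / marg q₀ T2 x)) * q₀ x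
      ∂lebd d ≤ 1 := by
  classical
  set V : Fin d → Measure ℝ := fun _ => volume with hV
  set R : Finset (Fin d) := T1 ∪ T2 with hR
  set A : (Fin d → ℝ) → ℝ≥0∞ := ∫⋯∫⁻_Rᶜ, q ∂V with hA
  set A₀ : (Fin d → ℝ) → ℝ≥0∞ := ∫⋯∫⁻_Rᶜ, q₀ ∂V with hA₀
  set B : (Fin d → ℝ) → ℝ≥0∞ := ∫⋯∫⁻_T2ᶜ, q ∂V with hB
  set B₀ : (Fin d → ℝ) → ℝ≥0∞ := ∫⋯∫⁻_T2ᶜ, q₀ ∂V with hB₀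
  have hT2R : T2 ⊆ R := hR ▸ Finset.subset_union_right
  have hT1R : T1 ⊆ R := hR ▸ Finset.subset_union_left
  have hT1Rc : Disjoint T1 Rᶜ := disjoint_compl_right.mono_left hT1R
  have hRcT2c : Rᶜ ⊆ T2ᶜ := Finset.compl_subset_compl.mpr hT2R
  have hT1T2c : T1 ⊆ T2ᶜ := fun j hj => Finset.mem_compl.mpr (Finset.disjoint_left.mp hdisj hj)
  have hT2c : (T2ᶜ : Finset (Fin d)) = T1 ∪ Rᶜ := by
    ext j
    simp only [Finset.mem_compl, Finset.mem_union, hR]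
    constructor
    · intro h2
      by_cases h1 : j ∈ T1
      · exact Or.inl h1
      · exact Or.inr (fun hc => hc.elim h1 h2)
    · rintro (h1 | hRc)
      · exact Finset.disjoint_left.mp hdisj h1
      · exact fun h2 => hRc (Or.inr h2)
  have hAm : Measurable A := hq.lmarginal _
  have hBlm : B = ∫⋯∫⁻_T1, A ∂V := by
    rw [hB, hA, hT2c, lmarginal_union V q hq hT1Rc]
  set g : (Fin d → ℝ) → ℝ≥0∞ := fun x => ((A x / B x) / (A₀ x / B₀ x)) * q₀ x with hg
  have hgmarg : ∀ x,
      ((marg q R x / marg q T2 x) / (marg q₀ R x / marg q₀ T2 x)) * q₀ x = g x := fun x => by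
    rw [marg_eq_lmarginal q hq R x, marg_eq_lmarginal q hq T2 x,
      marg_eq_lmarginal q₀ hq₀ R x, marg_eq_lmarginal q₀ hq₀ T2 x]
  have hgm : Measurable g :=
    (((hq.lmarginal _).div (hq.lmarginal _)).div
      ((hq₀.lmarginal _).div (hq₀.lmarginal _))).mul hq₀
  have step1 : ∀ x, (∫⋯∫⁻_Rᶜ, g ∂V) x ≤ (A x / B x) * B₀ x := by
    intro x
    have hAu : ∀ y, A (updateFinset x Rᶜ y) = A x := fun y =>
      lmarginal_updateFinset_of_subset V (Finset.Subset.refl _) q x y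
    have hA₀u : ∀ y, A₀ (updateFinset x Rᶜ y) = A₀ x := fun y =>
      lmarginal_updateFinset_of_subset V (Finset.Subset.refl _) q₀ x y
    have hBu : ∀ y, B (updateFinset x Rᶜ y) = B x := fun y =>
      lmarginal_updateFinset_of_subset V hRcT2c q x y
    have hB₀u : ∀ y, B₀ (updateFinset x Rᶜ y) = B₀ x := fun y =>
      lmarginal_updateFinset_of_subset V hRcT2c q₀ x y
    have h1 : (∫⋯∫⁻_Rᶜ, g ∂V) x
        = ∫⁻ y, ((A x / B x) / (A₀ x / B₀ x)) * q₀ (updateFinset x Rᶜ y)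
            ∂(Measure.pi fun _ : ↥(Rᶜ : Finset (Fin d)) => (volume : Measure ℝ)) := by
      refine lintegral_congr fun y => ?_
      show ((A (updateFinset x Rᶜ y) / B (updateFinset x Rᶜ y))
          / (A₀ (updateFinset x Rᶜ y) / B₀ (updateFinset x Rᶜ y)))
          * q₀ (updateFinset x Rᶜ y) = _
      rw [hAu y, hA₀u y, hBu y, hB₀u y]
    have hq₀u : Measurable fun y : ↥(Rᶜ : Finset (Fin d)) → ℝ => q₀ (updateFinset x Rᶜ y) :=
      hq₀.comp measurable_updateFinset
    rw [h1, lintegral_const_mul _ hq₀u]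
    have h2 : (∫⁻ y, q₀ (updateFinset x Rᶜ y)
        ∂(Measure.pi fun _ : ↥(Rᶜ : Finset (Fin d)) => (volume : Measure ℝ))) = A₀ x := rfl
    rw [h2]
    exact ennreal_E _ _ _
  have step2 : ∀ x, (∫⋯∫⁻_T1, (fun z => (A z / B z) * B₀ z) ∂V) x ≤ B₀ x := by
    intro x
    have hBu : ∀ y, B (updateFinset x T1 y) = B x := fun y =>
      lmarginal_updateFinset_of_subset V hT1T2c q x y
    have hB₀u : ∀ y, B₀ (updateFinset x T1 y) = B₀ x := fun y =>
      lmarginal_updateFinset_of_subset V hT1T2c q₀ x y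
    have h1 : (∫⋯∫⁻_T1, (fun z => (A z / B z) * B₀ z) ∂V) x
        = ∫⁻ y, ((B x)⁻¹ * B₀ x) * A (updateFinset x T1 y)
            ∂(Measure.pi fun _ : ↥T1 => (volume : Measure ℝ)) := by
      refine lintegral_congr fun y => ?_
      show (A (updateFinset x T1 y) / B (updateFinset x T1 y)) * B₀ (updateFinset x T1 y) = _
      rw [hBu y, hB₀u y, div_eq_mul_inv]
      ring
    have hAu : Measurable fun y : ↥T1 → ℝ => A (updateFinset x T1 y) :=
      hAm.comp measurable_updateFinset
    rw [h1, lintegral_const_mul _ hAu]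
    have h2 : (∫⁻ y, A (updateFinset x T1 y)
        ∂(Measure.pi fun _ : ↥T1 => (volume : Measure ℝ))) = (∫⋯∫⁻_T1, A ∂V) x := rfl
    rw [h2, ← hBlm]
    calc (B x)⁻¹ * B₀ x * B x = B₀ x * (B x * (B x)⁻¹) := by ring
      _ ≤ B₀ x * 1 := by
          refine mul_le_mul_right ?_ _
          rw [← div_eq_mul_inv]
          exact ENNReal.div_self_le_one
      _ = B₀ x := mul_one _
  have hlm1 : Measurable (∫⋯∫⁻_Rᶜ, g ∂V) := hgm.lmarginal _
  calc ∫⁻ x, ((marg q R x / marg q T2 x) / (marg q₀ R x / marg q₀ T2 x)) * q₀ x ∂lebd d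
      = ∫⁻ x, g x ∂lebd d := lintegral_congr hgmarg
    _ = (∫⋯∫⁻_univ, g ∂V) (fun _ => 0) := lintegral_eq_lmarginal_univ _
    _ = (∫⋯∫⁻_R, (∫⋯∫⁻_Rᶜ, g ∂V) ∂V) (fun _ => 0) := by
        rw [← lmarginal_union V g hgm disjoint_compl_right, Finset.union_compl]
    _ = (∫⋯∫⁻_T2, (∫⋯∫⁻_T1, (∫⋯∫⁻_Rᶜ, g ∂V) ∂V) ∂V) (fun _ => 0) := by
        rw [hR, lmarginal_union' V _ hlm1 hdisj]
    _ ≤ (∫⋯∫⁻_T2, (∫⋯∫⁻_T1, (fun z => (A z / B z) * B₀ z) ∂V) ∂V) (fun _ => 0) :=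
        lmarginal_mono (lmarginal_mono step1) _
    _ ≤ (∫⋯∫⁻_T2, B₀ ∂V) (fun _ => 0) := lmarginal_mono step2 _
    _ = 1 := lm_compl_norm q₀ hq₀ hq₀1 T2 _

lemma ennreal_mul_div_cancel {a b : ℝ≥0∞} (h0 : b ≠ 0) (ht : b ≠ ∞) : a * b / b = a := by
  rw [div_eq_mul_inv, mul_assoc, ENNReal.mul_inv_cancel h0 ht, mul_one]

def Kfin (d : ℕ) : Finset (Finset (Fin d) ⊕ Finset (Fin d) × Finset (Fin d)) :=
  (univ.filter (fun S : Finset (Fin d) => S.Nonempty)).disjSum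
    ((univ ×ˢ univ).filter (fun T : Finset (Fin d) × Finset (Fin d) =>
      T.1.Nonempty ∧ T.2.Nonempty ∧ Disjoint T.1 T.2))

def facFn {d : ℕ} (q' : (Fin d → ℝ) → ℝ≥0∞) :
    Finset (Fin d) ⊕ Finset (Fin d) × Finset (Fin d) → (Fin d → ℝ) → ℝ≥0∞
  | Sum.inl S => fun x => marg q' S x
  | Sum.inr T => fun x => marg q' (T.1 ∪ T.2) x / marg q' T.2 x

def wFn {d : ℕ} (σ : Finset (Fin d) → ℝ) (τ : Finset (Fin d) → Finset (Fin d) → ℝ) (υ : ℝ) :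
    Finset (Fin d) ⊕ Finset (Fin d) × Finset (Fin d) → ℝ
  | Sum.inl S => σ S / υ
  | Sum.inr T => τ T.1 T.2 / υ

variable {d : ℕ} {σ : Finset (Fin d) → ℝ} {τ : Finset (Fin d) → Finset (Fin d) → ℝ} {υ : ℝ}

lemma icl_eq (q' : (Fin d → ℝ) → ℝ≥0∞) (σ : Finset (Fin d) → ℝ)
    (τ : Finset (Fin d) → Finset (Fin d) → ℝ) (υ : ℝ) (x : Fin d → ℝ) :
    icl q' σ τ υ x = ∏ k ∈ Kfin d, facFn q' k x ^ wFn σ τ υ k := by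
  rw [icl, Kfin, Finset.prod_disjSum]
  rfl

lemma wFn_nonneg (hσ : ∀ S, 0 ≤ σ S) (hτ : ∀ A B, 0 ≤ τ A B) (hυpos : 0 < υ) :
    ∀ k, 0 ≤ wFn σ τ υ k := by
  rintro (S | T)
  · exact div_nonneg (hσ S) hυpos.le
  · exact div_nonneg (hτ T.1 T.2) hυpos.le

lemma wFn_sum
    (hυ : υ = (∑ S ∈ univ.filter (fun S : Finset (Fin d) => S.Nonempty), σ S) +
        ∑ T ∈ (univ ×ˢ univ).filter
          (fun T : Finset (Fin d) × Finset (Fin d) =>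
            T.1.Nonempty ∧ T.2.Nonempty ∧ Disjoint T.1 T.2), τ T.1 T.2)
    (hυpos : 0 < υ) : ∑ k ∈ Kfin d, wFn σ τ υ k = 1 := by
  rw [Kfin, Finset.sum_disjSum]
  have h1 : ∑ S ∈ univ.filter (fun S : Finset (Fin d) => S.Nonempty),
      wFn σ τ υ (Sum.inl S) = (∑ S ∈ univ.filter (fun S : Finset (Fin d) => S.Nonempty), σ S) / υ := by
    rw [Finset.sum_div]; rfl
  have h2 : ∑ T ∈ (univ ×ˢ univ).filter
      (fun T : Finset (Fin d) × Finset (Fin d) =>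
        T.1.Nonempty ∧ T.2.Nonempty ∧ Disjoint T.1 T.2), wFn σ τ υ (Sum.inr T)
      = (∑ T ∈ (univ ×ˢ univ).filter
      (fun T : Finset (Fin d) × Finset (Fin d) =>
        T.1.Nonempty ∧ T.2.Nonempty ∧ Disjoint T.1 T.2), τ T.1 T.2) / υ := by
    rw [Finset.sum_div]; rfl
  rw [h1, h2, ← add_div, ← hυ, div_self hυpos.ne']

lemma facFn_meas {q' : (Fin d → ℝ) → ℝ≥0∞} (hq' : Measurable q') (k) :
    Measurable (facFn q' k) := by
  rcases k with S | T
  · exact measurable_marg q' hq' S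
  · exact (measurable_marg q' hq' _).div (measurable_marg q' hq' _)

lemma facFn_ne {q₀ : (Fin d → ℝ) → ℝ≥0∞} (hq₀ : Measurable q₀) (hq₀pos : ∀ x, 0 < q₀ x)
    (x : Fin d → ℝ) (hx : ∀ S, marg q₀ S x ≠ ∞) (k) :
    facFn q₀ k x ≠ 0 ∧ facFn q₀ k x ≠ ∞ := by
  rcases k with S | T
  · exact ⟨(marg_pos q₀ hq₀ hq₀pos S x).ne', hx S⟩
  · constructor
    · intro h
      rcases ENNReal.div_eq_zero_iff.mp h with h0 | ht
      · exact (marg_pos q₀ hq₀ hq₀pos _ x).ne' h0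
      · exact hx _ ht
    · exact (ENNReal.div_lt_top (hx _) (marg_pos q₀ hq₀ hq₀pos _ x).ne').ne

lemma icl_ne {q₀ : (Fin d → ℝ) → ℝ≥0∞} (hq₀ : Measurable q₀) (hq₀pos : ∀ x, 0 < q₀ x)
    (x : Fin d → ℝ) (hx : ∀ S, marg q₀ S x ≠ ∞) :
    icl q₀ σ τ υ x ≠ 0 ∧ icl q₀ σ τ υ x ≠ ∞ := by
  rw [icl_eq]
  constructor
  · rw [Finset.prod_ne_zero_iff]
    intro k _ h
    rcases ENNReal.rpow_eq_zero_iff.mp h with ⟨h0, _⟩ | ⟨ht, _⟩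
    · exact (facFn_ne hq₀ hq₀pos x hx k).1 h0
    · exact (facFn_ne hq₀ hq₀pos x hx k).2 ht
  · refine (WithTop.prod_lt_top fun k _ => lt_top_iff_ne_top.mpr fun h => ?_).ne
    rcases ENNReal.rpow_eq_top_iff.mp h with ⟨h0, _⟩ | ⟨ht, _⟩
    · exact (facFn_ne hq₀ hq₀pos x hx k).1 h0
    · exact (facFn_ne hq₀ hq₀pos x hx k).2 ht

lemma pointwise_eq {q q₀ : (Fin d → ℝ) → ℝ≥0∞}
    (hq₀ : Measurable q₀) (hq₀pos : ∀ x, 0 < q₀ x)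
    (hσ : ∀ S, 0 ≤ σ S) (hτ : ∀ A B, 0 ≤ τ A B)
    (hυ : υ = (∑ S ∈ univ.filter (fun S : Finset (Fin d) => S.Nonempty), σ S) +
        ∑ T ∈ (univ ×ˢ univ).filter
          (fun T : Finset (Fin d) × Finset (Fin d) =>
            T.1.Nonempty ∧ T.2.Nonempty ∧ Disjoint T.1 T.2), τ T.1 T.2)
    (hυpos : 0 < υ) (x : Fin d → ℝ) (hx : ∀ S, marg q₀ S x ≠ ∞) :
    (icl q σ τ υ x / icl q₀ σ τ υ x) * q₀ x
      = ∏ k ∈ Kfin d, ((facFn q k x / facFn q₀ k x) * q₀ x) ^ wFn σ τ υ k := by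
  have hv := fun k => facFn_ne hq₀ hq₀pos x hx k
  have hw0 := wFn_nonneg hσ hτ hυpos
  have h1 : ∀ k ∈ Kfin d, facFn q k x ^ wFn σ τ υ k
      = (facFn q k x / facFn q₀ k x) ^ wFn σ τ υ k * facFn q₀ k x ^ wFn σ τ υ k := fun k _ => by
    rw [← ENNReal.mul_rpow_of_nonneg _ _ (hw0 k), ENNReal.div_mul_cancel (hv k).1 (hv k).2]
  have hV0 : (∏ k ∈ Kfin d, facFn q₀ k x ^ wFn σ τ υ k) ≠ 0 := by
    rw [Finset.prod_ne_zero_iff]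
    intro k _ h
    rcases ENNReal.rpow_eq_zero_iff.mp h with ⟨h0, _⟩ | ⟨ht, _⟩
    · exact (hv k).1 h0
    · exact (hv k).2 ht
  have hVt : (∏ k ∈ Kfin d, facFn q₀ k x ^ wFn σ τ υ k) ≠ ∞ := by
    refine (WithTop.prod_lt_top fun k _ => lt_top_iff_ne_top.mpr fun h => ?_).ne
    rcases ENNReal.rpow_eq_top_iff.mp h with ⟨h0, _⟩ | ⟨ht, _⟩
    · exact (hv k).1 h0
    · exact (hv k).2 ht
  rw [icl_eq q, icl_eq q₀, Finset.prod_congr rfl h1, Finset.prod_mul_distrib,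
    ennreal_mul_div_cancel hV0 hVt]
  have hq0x : q₀ x = ∏ k ∈ Kfin d, q₀ x ^ wFn σ τ υ k := by
    rw [← ennreal_rpow_sum _ _ _ (fun k _ => hw0 k), wFn_sum hυ hυpos, ENNReal.rpow_one]
  conv_lhs => rw [hq0x]
  rw [← Finset.prod_mul_distrib]
  exact Finset.prod_congr rfl fun k _ => (ENNReal.mul_rpow_of_nonneg _ _ (hw0 k)).symm

lemma key {q q₀ : (Fin d → ℝ) → ℝ≥0∞}
    (hq : Measurable q) (hq₀ : Measurable q₀)
    (hq1 : ∫⁻ x, q x ∂lebd d = 1) (hq₀1 : ∫⁻ x, q₀ x ∂lebd d = 1)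
    (hq₀pos : ∀ x, 0 < q₀ x)
    (hσ : ∀ S, 0 ≤ σ S) (hτ : ∀ A B, 0 ≤ τ A B)
    (hυ : υ = (∑ S ∈ univ.filter (fun S : Finset (Fin d) => S.Nonempty), σ S) +
        ∑ T ∈ (univ ×ˢ univ).filter
          (fun T : Finset (Fin d) × Finset (Fin d) =>
            T.1.Nonempty ∧ T.2.Nonempty ∧ Disjoint T.1 T.2), τ T.1 T.2)
    (hυpos : 0 < υ) :
    ∫⁻ x, (icl q σ τ υ x / icl q₀ σ τ υ x) * q₀ x ∂lebd d ≤ 1 := by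
  have hw0 := wFn_nonneg hσ hτ hυpos
  have hg : ∀ k, Measurable (fun x => (facFn q k x / facFn q₀ k x) * q₀ x) := fun k =>
    ((facFn_meas hq k).div (facFn_meas hq₀ k)).mul hq₀
  have hae : ∀ᵐ x ∂lebd d, ∀ S : Finset (Fin d), marg q₀ S x ≠ ∞ := by
    rw [MeasureTheory.ae_all_iff]
    intro S
    have h0 := marg_null q₀ hq₀ hq₀1 S
    rw [MeasureTheory.ae_iff]
    simpa only [ne_eq, not_not] using h0
  have hbound : ∀ k ∈ Kfin d, ∫⁻ x, (facFn q k x / facFn q₀ k x) * q₀ x ∂lebd d ≤ 1 := by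
    rintro (S | T) hk
    · exact factor_bound_inl q q₀ hq hq₀ hq1 S
    · have hT : T.1.Nonempty ∧ T.2.Nonempty ∧ Disjoint T.1 T.2 :=
        (Finset.mem_filter.mp (Finset.inr_mem_disjSum.mp hk)).2
      exact factor_bound_inr q q₀ hq hq₀ hq₀1 T.1 T.2 hT.2.2
  calc ∫⁻ x, (icl q σ τ υ x / icl q₀ σ τ υ x) * q₀ x ∂lebd d
      = ∫⁻ x, ∏ k ∈ Kfin d, ((facFn q k x / facFn q₀ k x) * q₀ x) ^ wFn σ τ υ k ∂lebd d := by
        refine lintegral_congr_ae ?_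
        filter_upwards [hae] with x hx
        exact pointwise_eq hq₀ hq₀pos hσ hτ hυ hυpos x hx
    _ ≤ ∏ k ∈ Kfin d, (∫⁻ x, (facFn q k x / facFn q₀ k x) * q₀ x ∂lebd d) ^ wFn σ τ υ k :=
        ENNReal.lintegral_prod_norm_pow_le _ (fun k _ => (hg k).aemeasurable)
          (wFn_sum hυ hυpos) (fun k _ => hw0 k)
    _ ≤ ∏ _k ∈ Kfin d, 1 :=
        Finset.prod_le_prod (fun _ _ => zero_le)
          (fun k hk => ENNReal.rpow_le_one (hbound k hk) (hw0 k))
    _ = 1 := Finset.prod_const_one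

instance lebd.sigmaFinite (d : ℕ) : SigmaFinite (lebd d) := by
  unfold lebd; infer_instance

section main
variable {d : ℕ} {σ : Finset (Fin d) → ℝ} {τ : Finset (Fin d) → Finset (Fin d) → ℝ} {υ : ℝ}

lemma measurable_icl {q : (Fin d → ℝ) → ℝ≥0∞} (hq : Measurable q) :
    Measurable (icl q σ τ υ) := by
  apply Measurable.mul
  · exact Finset.measurable_prod _ fun S _ => (measurable_marg q hq S).pow_const _
  · exact Finset.measurable_prod _ fun T _ =>
      ((measurable_marg q hq _).div (measurable_marg q hq _)).pow_const _

lemma measurable_clik {n : ℕ} {q : (Fin d → ℝ) → ℝ≥0∞} (hq : Measurable q) :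
    Measurable (clik (n := n) q σ τ υ) :=
  Finset.measurable_prod _ fun i _ => (measurable_icl hq).comp (measurable_pi_apply i)

lemma keyn (n : ℕ) {q q₀ : (Fin d → ℝ) → ℝ≥0∞}
    (hq : Measurable q) (hq₀ : Measurable q₀)
    (hq1 : ∫⁻ x, q x ∂lebd d = 1) (hq₀1 : ∫⁻ x, q₀ x ∂lebd d = 1)
    (hq₀pos : ∀ x, 0 < q₀ x)
    (hσ : ∀ S, 0 ≤ σ S) (hτ : ∀ A B, 0 ≤ τ A B)
    (hυ : υ = (∑ S ∈ univ.filter (fun S : Finset (Fin d) => S.Nonempty), σ S) +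
        ∑ T ∈ (univ ×ˢ univ).filter
          (fun T : Finset (Fin d) × Finset (Fin d) =>
            T.1.Nonempty ∧ T.2.Nonempty ∧ Disjoint T.1 T.2), τ T.1 T.2)
    (hυpos : 0 < υ) :
    ∫⁻ xs, (clik q σ τ υ xs / clik q₀ σ τ υ xs) * ∏ i, q₀ (xs i)
      ∂(Measure.pi fun _ : Fin n => lebd d) ≤ 1 := by
  set F : (Fin d → ℝ) → ℝ≥0∞ := fun x => (icl q σ τ υ x / icl q₀ σ τ υ x) * q₀ x with hF
  have hFm : Measurable F := ((measurable_icl hq).div (measurable_icl hq₀)).mul hq₀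
  have hae : ∀ᵐ xs ∂(Measure.pi fun _ : Fin n => lebd d),
      ∀ i, ∀ S : Finset (Fin d), marg q₀ S (xs i) ≠ ∞ := by
    rw [MeasureTheory.ae_all_iff]
    intro i
    rw [MeasureTheory.ae_all_iff]
    intro S
    have hNmeas : MeasurableSet {x : Fin d → ℝ | marg q₀ S x = ∞} :=
      (measurable_marg q₀ hq₀ S) (measurableSet_singleton ∞)
    have h0 := pi_eval_null (lebd d) _ hNmeas (marg_null q₀ hq₀ hq₀1 S) i
    rw [MeasureTheory.ae_iff]
    simpa only [ne_eq, not_not, Set.mem_setOf_eq] using h0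
  have heq : ∀ᵐ xs ∂(Measure.pi fun _ : Fin n => lebd d),
      (clik q σ τ υ xs / clik q₀ σ τ υ xs) * ∏ i, q₀ (xs i) = ∏ i, F (xs i) := by
    filter_upwards [hae] with xs hxs
    rw [clik, clik,
      ennreal_prod_div univ _ _ (fun i _ => (icl_ne hq₀ hq₀pos (xs i) (hxs i)).1)
        (fun i _ => (icl_ne hq₀ hq₀pos (xs i) (hxs i)).2),
      ← Finset.prod_mul_distrib]
  rw [lintegral_congr_ae heq, lintegral_pi_prod (lebd d) F hFm]
  exact Finset.prod_le_one (fun _ _ => zero_le)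
    (fun i _ => key hq hq₀ hq1 hq₀1 hq₀pos hσ hτ hυ hυpos)

end main

end helpers

/-- The split sample composite likelihood confidence set
`C^α(X_n) = {θ : U¹(θ;X_n) ≤ 1/α}` contains the true parameter `θ₀` with probability at
least `1 - α`, for every sample size. -/
theorem split_sample_CLR_confidence_set_coverage
    {d : ℕ} (n₁ n₂ : ℕ) {Θ : Type*}
    (p : Θ → (Fin d → ℝ) → ℝ≥0∞) (θ₀ : Θ)
    (hmeas : ∀ θ, Measurable (p θ))
    (hdens : ∀ θ, ∫⁻ x, p θ x ∂(lebd d) = 1)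
    (hpos : ∀ θ x, 0 < p θ x)
    (σ : Finset (Fin d) → ℝ) (τ : Finset (Fin d) → Finset (Fin d) → ℝ)
    (hσ : ∀ S, 0 ≤ σ S) (hτ : ∀ A B, 0 ≤ τ A B) (υ : ℝ)
    (hυ : υ = (∑ S ∈ univ.filter (fun S : Finset (Fin d) => S.Nonempty), σ S) +
        ∑ T ∈ (univ ×ˢ univ).filter
          (fun T : Finset (Fin d) × Finset (Fin d) =>
            T.1.Nonempty ∧ T.2.Nonempty ∧ Disjoint T.1 T.2), τ T.1 T.2)
    (hυpos : 0 < υ)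
    (θhat₂ : (Fin n₂ → Fin d → ℝ) → Θ) (α : ℝ) (hα : α ∈ Set.Ioo (0:ℝ) 1) :
    1 - ENNReal.ofReal α ≤
      sampleLaw n₁ n₂ (p θ₀)
        {z | clik (p (θhat₂ z.2)) σ τ υ z.1 / clik (p θ₀) σ τ υ z.1
          ≤ ENNReal.ofReal (1 / α)} := by
  obtain ⟨hα0, hα1⟩ := hα
  set ν₁ : Measure (Fin n₁ → Fin d → ℝ) := Measure.pi fun _ => lebd d with hν₁
  set ν₂ : Measure (Fin n₂ → Fin d → ℝ) := Measure.pi fun _ => lebd d with hν₂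
  set ρ : (Fin n₁ → Fin d → ℝ) × (Fin n₂ → Fin d → ℝ) → ℝ≥0∞ :=
    fun z => (∏ i, p θ₀ (z.1 i)) * ∏ i, p θ₀ (z.2 i) with hρ
  set U : (Fin n₁ → Fin d → ℝ) × (Fin n₂ → Fin d → ℝ) → ℝ≥0∞ :=
    fun z => clik (p (θhat₂ z.2)) σ τ υ z.1 / clik (p θ₀) σ τ υ z.1 with hU
  have hρ1m : Measurable fun xs : Fin n₁ → Fin d → ℝ => ∏ i, p θ₀ (xs i) :=
    Finset.measurable_prod _ fun i _ => (hmeas θ₀).comp (measurable_pi_apply i)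
  have hρ2m : Measurable fun xs : Fin n₂ → Fin d → ℝ => ∏ i, p θ₀ (xs i) :=
    Finset.measurable_prod _ fun i _ => (hmeas θ₀).comp (measurable_pi_apply i)
  have hint1 : ∫⁻ xs, ∏ i, p θ₀ (xs i) ∂ν₁ = 1 := by
    rw [hν₁, lintegral_pi_prod (lebd d) _ (hmeas θ₀), hdens θ₀]
    simp
  have hint2 : ∫⁻ xs, ∏ i, p θ₀ (xs i) ∂ν₂ = 1 := by
    rw [hν₂, lintegral_pi_prod (lebd d) _ (hmeas θ₀), hdens θ₀]
    simp
  have htot : sampleLaw n₁ n₂ (p θ₀) Set.univ = 1 := by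
    rw [sampleLaw, withDensity_apply _ MeasurableSet.univ, Measure.restrict_univ,
      lintegral_prod_mul hρ1m.aemeasurable hρ2m.aemeasurable, hint1, hint2, mul_one]
  have hUb : ∫⁻ z, U z * ρ z ∂(ν₁.prod ν₂) ≤ 1 := by
    refine le_trans (lintegral_prod_le' ν₁ ν₂ _) ?_
    have hinner : ∀ y, ∫⁻ x, U (x, y) * ρ (x, y) ∂ν₁ ≤ ∏ i, p θ₀ (y i) := by
      intro y
      have hform : ∀ x, U (x, y) * ρ (x, y)
          = ((clik (p (θhat₂ y)) σ τ υ x / clik (p θ₀) σ τ υ x) * ∏ i, p θ₀ (x i))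
              * ∏ i, p θ₀ (y i) := by
        intro x
        show (clik (p (θhat₂ y)) σ τ υ x / clik (p θ₀) σ τ υ x)
            * ((∏ i, p θ₀ (x i)) * ∏ i, p θ₀ (y i)) = _
        ring
      have hm : Measurable fun x : Fin n₁ → Fin d → ℝ =>
          (clik (p (θhat₂ y)) σ τ υ x / clik (p θ₀) σ τ υ x) * ∏ i, p θ₀ (x i) :=
        ((measurable_clik (hmeas _)).div (measurable_clik (hmeas _))).mul hρ1m
      rw [lintegral_congr hform, lintegral_mul_const _ hm]
      calc _ ≤ 1 * ∏ i, p θ₀ (y i) := by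
            refine mul_le_mul_left ?_ _
            exact keyn n₁ (hmeas _) (hmeas _) (hdens _) (hdens _) (hpos θ₀)
              hσ hτ hυ hυpos
        _ = ∏ i, p θ₀ (y i) := one_mul _
    refine le_trans (lintegral_mono hinner) (le_of_eq hint2)
  rw [measure_eq_iInf]
  refine le_iInf fun t => le_iInf fun hAt => le_iInf fun ht => ?_
  have hcompl : sampleLaw n₁ n₂ (p θ₀) tᶜ ≤ ENNReal.ofReal α := by
    rw [sampleLaw, withDensity_apply _ ht.compl, ← lintegral_indicator ht.compl _]
    have hpt : ∀ z, tᶜ.indicator ρ z ≤ ENNReal.ofReal α * (U z * ρ z) := by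
      intro z
      by_cases hz : z ∈ tᶜ
      · rw [Set.indicator_of_mem hz]
        have hzA : ¬ (U z ≤ ENNReal.ofReal (1 / α)) := fun h => hz (hAt h)
        have hU1 : ENNReal.ofReal (1 / α) ≤ U z := (lt_of_not_ge hzA).le
        have h1 : (1 : ℝ≥0∞) ≤ ENNReal.ofReal α * U z := by
          calc (1 : ℝ≥0∞) = ENNReal.ofReal α * ENNReal.ofReal (1 / α) := by
                rw [← ENNReal.ofReal_mul hα0.le, mul_one_div_cancel hα0.ne', ENNReal.ofReal_one]
            _ ≤ ENNReal.ofReal α * U z := mul_le_mul_right hU1 _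
        calc ρ z = 1 * ρ z := (one_mul _).symm
          _ ≤ (ENNReal.ofReal α * U z) * ρ z := mul_le_mul_left h1 _
          _ = ENNReal.ofReal α * (U z * ρ z) := mul_assoc _ _ _
      · rw [Set.indicator_of_notMem hz]; exact zero_le
    calc ∫⁻ z, tᶜ.indicator ρ z ∂(ν₁.prod ν₂)
        ≤ ∫⁻ z, ENNReal.ofReal α * (U z * ρ z) ∂(ν₁.prod ν₂) := lintegral_mono hpt
      _ = ENNReal.ofReal α * ∫⁻ z, U z * ρ z ∂(ν₁.prod ν₂) :=
          lintegral_const_mul' _ _ ENNReal.ofReal_ne_top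
      _ ≤ ENNReal.ofReal α * 1 := mul_le_mul_right hUb _
      _ = ENNReal.ofReal α := mul_one _
  rw [tsub_le_iff_right]
  have hsplit := measure_add_measure_compl (μ := sampleLaw n₁ n₂ (p θ₀)) ht
  calc (1 : ℝ≥0∞) = sampleLaw n₁ n₂ (p θ₀) t + sampleLaw n₁ n₂ (p θ₀) tᶜ := by
        rw [hsplit, htot]
    _ ≤ sampleLaw n₁ n₂ (p θ₀) t + ENNReal.ofReal α := add_le_add_right hcompl _
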